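/- The set {(x, y) ∈ SU(2) × SU(2) : x y x⁻¹ y⁻¹ = -I} consists of a single orbit under the simultaneous conjugation action of SU(2): for any x, y ∈ SU(2) with x y x⁻¹ y⁻¹ = -I, there exists g ∈ SU(2) such that g x g⁻¹ = [[i, 0], [0, -i]] and g y g⁻¹ = [[0, i], [i, 0]]. -/

import Mathlib

open Matrix

/-- `SU2` is the special unitary group of 2×2 complex matrices: the subgroup of the
unitary group `Matrix.unitaryGroup (Fin 2) ℂ` consisting of matrices of determinant 1. -/
def SU2 : Subgroup (Matrix.unitaryGroup (Fin 2) ℂ) where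
  carrier := {A | Matrix.det (A : Matrix (Fin 2) (Fin 2) ℂ) = 1}
  one_mem' := by simp
  mul_mem' := by
    intro a b ha hb
    simp only [Set.mem_setOf_eq] at *
    rw [Submonoid.coe_mul, Matrix.det_mul, ha, hb, one_mul]
  inv_mem' := by
    intro a ha
    simp only [Set.mem_setOf_eq] at *
    have h1 : ((a⁻¹ : Matrix.unitaryGroup (Fin 2) ℂ) : Matrix (Fin 2) (Fin 2) ℂ)
        = star (a : Matrix (Fin 2) (Fin 2) ℂ) := rfl
    rw [h1]
    change Matrix.det ((a : Matrix (Fin 2) (Fin 2) ℂ)ᴴ) = 1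
    rw [Matrix.det_conjTranspose, ha, star_one]

/-!
The hypothesis says that `x` and `y` anticommute, so `x = -y x y⁻¹` has trace zero and, having
determinant one, eigenvalues `±i`. If `v` is a unit `i`-eigenvector of `x`, the element of SU(2)
with first column `v` has second column `(-v̄₁, v̄₀)`, which is a `-i`-eigenvector because every
element of SU(2) commutes with the antilinear map `v ↦ (-v̄₁, v̄₀)`; conjugating by its inverse
turns `x` into `diag(i, -i)`. An element of SU(2) anticommuting with `diag(i, -i)` is
`[[0, -c̄], [c, 0]]` with `|c| = 1`, and conjugation by `diag(μ, μ̄)` with `μ² = -ic` fixes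
`diag(i, -i)` and turns it into `[[0, i], [i, 0]]`.
-/

open ComplexConjugate Complex

theorem Matrix.trace_eq_zero_of_mul_eq_neg_mul {n R : Type*} [Fintype n] [DecidableEq n]
    [CommRing R] [IsAddTorsionFree R] {A : Matrix n n R} (U : (Matrix n n R)ˣ)
    (h : A * (U : Matrix n n R) = -(U * A)) : A.trace = 0 := by
  have hA : A = -((U : Matrix n n R) * A * (U⁻¹ : (Matrix n n R)ˣ)) := by
    rw [← neg_mul, ← h, mul_assoc, Units.mul_inv, mul_one]
  rw [← self_eq_neg]
  conv_lhs => rw [hA]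
  rw [trace_neg, trace_units_conj]

theorem Complex.normSq_add_normSq_eq_one_iff (a c : ℂ) :
    normSq a + normSq c = 1 ↔ conj a * a + conj c * c = 1 := by
  rw [← ofReal_inj]
  push_cast
  simp only [normSq_eq_conj_mul_self]

theorem Matrix.exists_unit_eigenvector_I {A : Matrix (Fin 2) (Fin 2) ℂ} (hdet : A.det = 1)
    (htr : A.trace = 0) :
    ∃ v : Fin 2 → ℂ, normSq (v 0) + normSq (v 1) = 1 ∧ A *ᵥ v = I • v := by
  obtain ⟨w, hw0, hw⟩ : ∃ w ≠ 0, (A - I • 1) *ᵥ w = 0 := by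
    rw [det_fin_two] at hdet
    rw [trace_fin_two] at htr
    rw [exists_mulVec_eq_zero_iff, det_fin_two]
    simp only [sub_apply, smul_apply, one_apply_eq, one_apply_ne, smul_eq_mul, mul_one,
      mul_zero, sub_zero, ne_eq, zero_ne_one, one_ne_zero, not_false_eq_true]
    linear_combination hdet - I * htr + I_sq
  set r : ℝ := normSq (w 0) + normSq (w 1)
  have hr : 0 < r := by
    obtain ⟨i, hi⟩ := Function.ne_iff.1 hw0
    fin_cases i
    · exact add_pos_of_pos_of_nonneg (normSq_pos.2 hi) (normSq_nonneg _)
    · exact add_pos_of_nonneg_of_pos (normSq_nonneg _) (normSq_pos.2 hi)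
  refine ⟨(((√r)⁻¹ : ℝ) : ℂ) • w, ?_, ?_⟩
  · simp only [Pi.smul_apply, smul_eq_mul, normSq_mul, normSq_ofReal, ← mul_add, ← mul_inv,
      Real.mul_self_sqrt hr.le]
    exact inv_mul_cancel₀ hr.ne'
  · rw [sub_mulVec, sub_eq_zero, smul_mulVec, one_mulVec] at hw
    rw [mulVec_smul, hw, smul_comm]

namespace SU2

local notation "M₂" => Matrix (Fin 2) (Fin 2) ℂ

@[simp] lemma coe_mul (x y : SU2) : ((x * y : SU2) : M₂) = (x : M₂) * (y : M₂) := rfl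

@[simp] lemma coe_inv (x : SU2) : ((x⁻¹ : SU2) : M₂) = star (x : M₂) := rfl

lemma star_mul_self (x : SU2) : star (x : M₂) * x = 1 := x.1.2.1

lemma mul_star_self (x : SU2) : (x : M₂) * star (x : M₂) = 1 := x.1.2.2

lemma det_coe (x : SU2) : (x : M₂).det = 1 := x.2

def ofColumn (a c : ℂ) (h : normSq a + normSq c = 1) : SU2 :=
  have h' := (normSq_add_normSq_eq_one_iff a c).1 h
  ⟨⟨!![a, -conj c; c, conj a], mem_unitaryGroup_iff.2 <| by
    ext i j
    fin_cases i <;> fin_cases j <;>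
      simp [Matrix.mul_apply, Fin.sum_univ_two, star_eq_conjTranspose]
    · linear_combination h'
    · ring
    · ring
    · linear_combination h'⟩, by
    show det !![a, -conj c; c, conj a] = 1
    rw [det_fin_two_of]
    linear_combination h'⟩

@[simp] lemma coe_ofColumn (a c : ℂ) (h : normSq a + normSq c = 1) :
    (ofColumn a c h : M₂) = !![a, -conj c; c, conj a] := rfl

lemma star_coe_eq_adjugate (x : SU2) : star (x : M₂) = adjugate (x : M₂) := calc
  star (x : M₂) = adjugate (x : M₂) * x * star (x : M₂) := by
    rw [adjugate_mul, det_coe, one_smul, one_mul]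
  _ = adjugate (x : M₂) := by rw [mul_assoc, mul_star_self, mul_one]

lemma exists_eq_ofColumn (x : SU2) : ∃ a c h, x = ofColumn a c h := by
  have h := star_coe_eq_adjugate x
  rw [adjugate_fin_two] at h
  have h00 := congrFun₂ h 0 0
  have h01 := congrFun₂ h 0 1
  simp only [star_apply, of_apply, cons_val', cons_val_zero, cons_val_one, empty_val',
    cons_val_fin_one, star_def] at h00 h01
  have hx : (x : M₂) =
      !![(x : M₂) 0 0, -conj ((x : M₂) 1 0); (x : M₂) 1 0, conj ((x : M₂) 0 0)] := by
    rw [eta_fin_two (x : M₂)]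
    simp [h00, h01]
  have hdet := det_coe x
  rw [hx, det_fin_two_of] at hdet
  refine ⟨(x : M₂) 0 0, (x : M₂) 1 0, ?_, Subtype.ext <| Subtype.ext hx⟩
  rw [normSq_add_normSq_eq_one_iff]
  linear_combination hdet

lemma mul_eq_neg_mul_of_commutator_eq_neg_one {x y : SU2}
    (h : ((x * y * x⁻¹ * y⁻¹ : SU2) : M₂) = -1) : (x : M₂) * y = -((y : M₂) * x) := calc
  (x : M₂) * y = ((x * y * x⁻¹ * y⁻¹ * (y * x) : SU2) : M₂) := by
    rw [show x * y * x⁻¹ * y⁻¹ * (y * x) = x * y by group, coe_mul]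
  _ = -((y : M₂) * x) := by rw [coe_mul, h, neg_one_mul, coe_mul]

lemma trace_eq_zero_of_commutator_eq_neg_one {x y : SU2}
    (h : ((x * y * x⁻¹ * y⁻¹ : SU2) : M₂) = -1) : (x : M₂).trace = 0 :=
  trace_eq_zero_of_mul_eq_neg_mul (Unitary.toUnits y.1) (mul_eq_neg_mul_of_commutator_eq_neg_one h)

lemma coe_conj_eq_neg_one (g : SU2) {c : SU2} (h : (c : M₂) = -1) :
    ((g * c * g⁻¹ : SU2) : M₂) = -1 := by
  simp [h]

lemma exists_conj_eq_diag (x : SU2) (hx : (x : M₂).trace = 0) :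
    ∃ g : SU2, ((g * x * g⁻¹ : SU2) : M₂) = !![I, 0; 0, -I] := by
  obtain ⟨v, hv, hxv⟩ := exists_unit_eigenvector_I (det_coe x) hx
  set u := ofColumn (v 0) (v 1) hv
  have hxu : (x : M₂) * u = u * !![I, 0; 0, -I] := by
    obtain ⟨a, c, hac, hxac⟩ := exists_eq_ofColumn x
    rw [hxac] at hxv ⊢
    have h0 := congrFun hxv 0
    have h1 := congrFun hxv 1
    simp only [coe_ofColumn, mulVec, dotProduct, of_apply, cons_val', cons_val_zero,
      cons_val_one, cons_val_fin_one, Fin.sum_univ_two, neg_mul, Pi.smul_apply,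
      smul_eq_mul] at h0 h1
    have h0' := congrArg conj h0
    have h1' := congrArg conj h1
    simp only [map_add, map_neg, map_mul, conj_conj, conj_I] at h0' h1'
    ext i j
    fin_cases i <;> fin_cases j <;> simp [Matrix.mul_apply, Fin.sum_univ_two, u]
    · linear_combination h0
    · linear_combination -h1'
    · linear_combination h1
    · linear_combination h0'
  refine ⟨u⁻¹, ?_⟩
  rw [coe_mul, coe_mul, inv_inv, coe_inv, mul_assoc, hxu, ← mul_assoc, star_mul_self, one_mul]

lemma exists_conj_eq_antidiag_of_eq_diag {x y : SU2} (hx : (x : M₂) = !![I, 0; 0, -I])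
    (hxy : ((x * y * x⁻¹ * y⁻¹ : SU2) : M₂) = -1) :
    ∃ d : SU2, d * x * d⁻¹ = x ∧ ((d * y * d⁻¹ : SU2) : M₂) = !![0, I; I, 0] := by
  have hanti := mul_eq_neg_mul_of_commutator_eq_neg_one hxy
  obtain ⟨a, c, hac, rfl⟩ := exists_eq_ofColumn y
  rw [hx, coe_ofColumn, mul_fin_two, mul_fin_two] at hanti
  obtain rfl : a = 0 := by
    have h00 := congrFun₂ hanti 0 0
    simp only [of_apply, cons_val', cons_val_zero, cons_val_fin_one, mul_zero, add_zero,
      zero_mul, Matrix.neg_apply] at h00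
    simpa [I_ne_zero] using (by linear_combination h00 : 2 * I * a = 0)
  have hc : normSq c = 1 := by simpa using hac
  have hcc : conj c * c = 1 := by simpa using (normSq_add_normSq_eq_one_iff 0 c).1 hac
  obtain ⟨μ, hμ⟩ := IsAlgClosed.exists_pow_nat_eq (-I * c) two_pos
  have hμ' : conj μ ^ 2 = I * conj c := by simpa using congrArg conj hμ
  have hμ1 : normSq μ + normSq 0 = 1 := by
    have := congrArg normSq hμ
    simp only [map_pow, normSq_mul, normSq_neg, normSq_I, hc, one_mul] at this
    simpa using (pow_eq_one_iff_of_nonneg (normSq_nonneg μ) two_ne_zero).1 this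
  have hμμ : conj μ * μ = 1 := by simpa using (normSq_add_normSq_eq_one_iff μ 0).1 hμ1
  refine ⟨ofColumn μ 0 hμ1, Subtype.ext <| Subtype.ext ?_, ?_⟩
  · simp only [coe_mul, coe_inv, coe_ofColumn, hx]
    ext i j
    fin_cases i <;> fin_cases j <;>
      simp [Matrix.mul_apply, Fin.sum_univ_two, star_eq_conjTranspose] <;>
      linear_combination I * hμμ
  · simp only [coe_mul, coe_inv, coe_ofColumn]
    ext i j
    fin_cases i <;> fin_cases j <;>
      simp [Matrix.mul_apply, Fin.sum_univ_two, star_eq_conjTranspose]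
    · linear_combination -conj c * hμ + I * hcc
    · linear_combination c * hμ' + I * hcc

end SU2

/-- The set `{(x, y) ∈ SU(2)² : x y x⁻¹ y⁻¹ = -I}` is a single orbit under simultaneous
conjugation: any such pair can be conjugated to `([[i,0],[0,-i]], [[0,i],[i,0]])`. -/
theorem commutator_neg_one_single_orbit
    (x y : SU2)
    (hxy : ((x * y * x⁻¹ * y⁻¹ : SU2) : Matrix (Fin 2) (Fin 2) ℂ) = -1) :
    ∃ g : SU2,
      ((g * x * g⁻¹ : SU2) : Matrix (Fin 2) (Fin 2) ℂ) = !![Complex.I, 0; 0, -Complex.I] ∧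
      ((g * y * g⁻¹ : SU2) : Matrix (Fin 2) (Fin 2) ℂ) = !![0, Complex.I; Complex.I, 0] := by
  obtain ⟨g, hg⟩ := SU2.exists_conj_eq_diag x (SU2.trace_eq_zero_of_commutator_eq_neg_one hxy)
  have hxy' : (((g * x * g⁻¹) * (g * y * g⁻¹) * (g * x * g⁻¹)⁻¹ * (g * y * g⁻¹)⁻¹ : SU2) :
      Matrix (Fin 2) (Fin 2) ℂ) = -1 := by
    rw [show (g * x * g⁻¹) * (g * y * g⁻¹) * (g * x * g⁻¹)⁻¹ * (g * y * g⁻¹)⁻¹ =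
      g * (x * y * x⁻¹ * y⁻¹) * g⁻¹ by group]
    exact SU2.coe_conj_eq_neg_one g hxy
  obtain ⟨d, hdx, hdy⟩ := SU2.exists_conj_eq_antidiag_of_eq_diag hg hxy'
  refine ⟨d * g, ?_, ?_⟩
  · rw [show d * g * x * (d * g)⁻¹ = d * (g * x * g⁻¹) * d⁻¹ by group, hdx, hg]
  · rw [show d * g * y * (d * g)⁻¹ = d * (g * y * g⁻¹) * d⁻¹ by group, hdy]
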